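/- Let δ, δ' ≥ 2 be real numbers and let π(x) = x^{δ'/2−1}(1−x)^{δ/2−1}/B(δ'/2, δ/2) for x ∈ (0,1). Let p : (0,1) × (0,1) → [0,∞) be jointly measurable with ∫_0^1 p(x,y) dy = 1 for every x ∈ (0,1) and π(x) p(x,y) = π(y) p(y,x) for all x, y ∈ (0,1). Fix (n,q) ∈ ℕ×ℕ, a finite set Λ ⊂ ℕ×ℕ and nonnegative constants (B_{i,j})_{(i,j)∈Λ} such that for all x ∈ (0,1): ∫_0^1 y^n (1−y)^q p(x,y) dy = Σ_{(i,j)∈Λ} B_{i,j} x^i (1−x)^j. Then the probability measure ν_{n,q}P defined by A ↦ ∫_{(0,1)} (∫_A p(x,y) dy) dν_{n,q}(x) equals Σ_{(i,j)∈Λ} α_{i,j} ν_{i,j}, where α_{i,j} = B_{i,j} · B(i+δ'/2, j+δ/2) / B(n+δ'/2, q+δ/2); moreover the α_{i,j} are nonnegative and Σ_{(i,j)∈Λ} α_{i,j} = 1. -/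

import Mathlib

open Finset Real MeasureTheory
open scoped ENNReal NNReal

/-- Euler Beta function `B(a,b) = Γ(a)Γ(b)/Γ(a+b)`. -/
noncomputable def Beta (a b : ℝ) : ℝ := Real.Gamma a * Real.Gamma b / Real.Gamma (a + b)

/-- `nu δ δ' i j` is the Beta distribution on `(0,1)` with parameters `(i + δ'/2, j + δ/2)`. -/
noncomputable def nu (δ δ' : ℝ) (i j : ℕ) : Measure ℝ :=
  (volume.restrict (Set.Ioo (0 : ℝ) 1)).withDensity
    (fun x => ENNReal.ofReal
      (x ^ ((i : ℝ) + δ' / 2 - 1) * (1 - x) ^ ((j : ℝ) + δ / 2 - 1) /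
        Beta ((i : ℝ) + δ' / 2) ((j : ℝ) + δ / 2)))

/-!
The density of `ν_{n,q}` is `c x^n (1-x)^q π(x)` with `c = B(δ'/2, δ/2) / B(n+δ'/2, q+δ/2)`.
Reversibility `π(x) p(x,y) = π(y) p(y,x)` and Tonelli turn `ν_{n,q}P(A)` into
`c ∫_A π(y) ∫ x^n (1-x)^q p(y,x) dx dy`; the inner integral is the polynomial
`∑ B_{ij} y^i (1-y)^j` by hypothesis, and `π(y) y^i (1-y)^j` is `B(i+δ'/2, j+δ/2) / B(δ'/2, δ/2)`
times the density of `ν_{i,j}`, which yields the mixture. For `A = (0,1)` both sides are total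
masses, equal to `1` by the marginal condition, so the weights sum to `1`.
-/

section Reversible

variable {α : Type*} [MeasurableSpace α] {μ : Measure α} [SFinite μ]

theorem setLIntegral_mul_setLIntegral_of_reversible {S A : Set α} (hS : MeasurableSet S)
    (hA : MeasurableSet A) (hAS : A ⊆ S) {ρ f : α → ℝ≥0∞} {k : α × α → ℝ≥0∞}
    (hρ : Measurable ρ) (hf : Measurable f) (hk : Measurable k)
    (hrev : ∀ x ∈ S, ∀ y ∈ S, ρ x * k (x, y) = ρ y * k (y, x)) :
    ∫⁻ x in S, f x * ρ x * ∫⁻ y in A, k (x, y) ∂μ ∂μ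
      = ∫⁻ y in A, ρ y * ∫⁻ x in S, f x * k (y, x) ∂μ ∂μ := by
  calc ∫⁻ x in S, f x * ρ x * ∫⁻ y in A, k (x, y) ∂μ ∂μ
      = ∫⁻ x in S, ∫⁻ y in A, f x * (ρ x * k (x, y)) ∂μ ∂μ := by
        refine lintegral_congr fun x => ?_
        rw [mul_assoc, ← lintegral_const_mul _ (by fun_prop), ← lintegral_const_mul _ (by fun_prop)]
    _ = ∫⁻ x in S, ∫⁻ y in A, f x * (ρ y * k (y, x)) ∂μ ∂μ :=
        setLIntegral_congr_fun hS fun x hx =>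
          setLIntegral_congr_fun hA fun y hy => by rw [hrev x hx y (hAS hy)]
    _ = ∫⁻ y in A, ∫⁻ x in S, f x * (ρ y * k (y, x)) ∂μ ∂μ :=
        lintegral_lintegral_swap (by fun_prop)
    _ = ∫⁻ y in A, ρ y * ∫⁻ x in S, f x * k (y, x) ∂μ ∂μ := by
        refine lintegral_congr fun y => ?_
        simp_rw [mul_left_comm (f _)]
        exact lintegral_const_mul _ (by fun_prop)

end Reversible

noncomputable def betaDensity (a b x : ℝ) : ℝ := x ^ (a - 1) * (1 - x) ^ (b - 1) / Beta a b

section BetaDensity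

variable {a b x : ℝ}

@[fun_prop]
theorem measurable_betaDensity (a b : ℝ) : Measurable (betaDensity a b) := by
  unfold betaDensity
  fun_prop

theorem Beta_pos (ha : 0 < a) (hb : 0 < b) : 0 < Beta a b :=
  ProbabilityTheory.beta_pos ha hb

theorem betaDensity_nonneg (ha : 0 < a) (hb : 0 < b) (hx : x ∈ Set.Ioo (0 : ℝ) 1) :
    0 ≤ betaDensity a b x := by
  have := Beta_pos ha hb
  have : 0 ≤ x ^ (a - 1) := rpow_nonneg hx.1.le _
  have : 0 ≤ (1 - x) ^ (b - 1) := rpow_nonneg (by linarith [hx.2]) _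
  unfold betaDensity
  positivity

theorem betaDensity_natCast_add (ha : 0 < a) (hb : 0 < b) (hx : x ∈ Set.Ioo (0 : ℝ) 1)
    (i j : ℕ) :
    betaDensity (i + a) (j + b) x
      = Beta a b / Beta (i + a) (j + b) * (x ^ i * (1 - x) ^ j * betaDensity a b x) := by
  have := (Beta_pos ha hb).ne'
  have hx1 : 0 < 1 - x := by linarith [hx.2]
  rw [betaDensity, betaDensity, add_sub_assoc, add_sub_assoc, rpow_add hx.1, rpow_add hx1,
    rpow_natCast, rpow_natCast]
  field_simp

theorem Beta_div_mul_betaDensity_mul_sum (ha : 0 < a) (hb : 0 < b) (hx : x ∈ Set.Ioo (0 : ℝ) 1)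
    (n q : ℕ) (Λ : Finset (ℕ × ℕ)) (B : ℕ × ℕ → ℝ) :
    Beta a b / Beta (n + a) (q + b) *
        (betaDensity a b x * ∑ ij ∈ Λ, B ij * x ^ ij.1 * (1 - x) ^ ij.2)
      = ∑ ij ∈ Λ, B ij * Beta (ij.1 + a) (ij.2 + b) / Beta (n + a) (q + b) *
          betaDensity (ij.1 + a) (ij.2 + b) x := by
  rw [mul_sum, mul_sum]
  refine Finset.sum_congr rfl fun ij _ => ?_
  have := (Beta_pos (a := ij.1 + a) (b := ij.2 + b) (by positivity) (by positivity)).ne'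
  rw [betaDensity_natCast_add ha hb hx]
  generalize Beta (ij.1 + a) (ij.2 + b) = u at this ⊢
  field_simp

theorem mixture_weight_nonneg (ha : 0 < a) (hb : 0 < b) (n q : ℕ) {Λ : Finset (ℕ × ℕ)}
    {B : ℕ × ℕ → ℝ} (hB : ∀ ij ∈ Λ, 0 ≤ B ij) :
    ∀ ij ∈ Λ, 0 ≤ B ij * Beta (ij.1 + a) (ij.2 + b) / Beta (n + a) (q + b) := fun ij hij =>
  div_nonneg (mul_nonneg (hB ij hij) (Beta_pos (by positivity) (by positivity)).le)
    (Beta_pos (by positivity) (by positivity)).le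

theorem ofReal_Beta_div_mul_betaDensity_mul_sum (ha : 0 < a) (hb : 0 < b)
    (hx : x ∈ Set.Ioo (0 : ℝ) 1) (n q : ℕ) {Λ : Finset (ℕ × ℕ)} {B : ℕ × ℕ → ℝ}
    (hB : ∀ ij ∈ Λ, 0 ≤ B ij) :
    ENNReal.ofReal (Beta a b / Beta (n + a) (q + b)) * (ENNReal.ofReal (betaDensity a b x) *
        ENNReal.ofReal (∑ ij ∈ Λ, B ij * x ^ ij.1 * (1 - x) ^ ij.2))
      = ∑ ij ∈ Λ, ENNReal.ofReal (B ij * Beta (ij.1 + a) (ij.2 + b) / Beta (n + a) (q + b)) *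
          ENNReal.ofReal (betaDensity (ij.1 + a) (ij.2 + b) x) := by
  have hweight := mixture_weight_nonneg ha hb n q hB
  have hc : 0 ≤ Beta a b / Beta (n + a) (q + b) :=
    div_nonneg (Beta_pos ha hb).le (Beta_pos (by positivity) (by positivity)).le
  rw [← ENNReal.ofReal_mul (betaDensity_nonneg ha hb hx), ← ENNReal.ofReal_mul hc,
    Beta_div_mul_betaDensity_mul_sum ha hb hx, ENNReal.ofReal_sum_of_nonneg fun ij hij =>
      mul_nonneg (hweight ij hij) (betaDensity_nonneg (by positivity) (by positivity) hx)]
  exact Finset.sum_congr rfl fun ij hij => ENNReal.ofReal_mul (hweight ij hij)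

theorem lintegral_betaDensity (ha : 0 < a) (hb : 0 < b) :
    ∫⁻ x in Set.Ioo (0 : ℝ) 1, ENNReal.ofReal (betaDensity a b x) = 1 := by
  rw [← ProbabilityTheory.lintegral_betaPDF_eq_one ha hb, ProbabilityTheory.lintegral_betaPDF]
  simp only [betaDensity, Beta, ProbabilityTheory.beta]
  simp_rw [one_div_mul_eq_div, mul_div_right_comm]

end BetaDensity

section Nu

variable {δ δ' : ℝ}

theorem lintegral_nu {G : ℝ → ℝ≥0∞} (hG : Measurable G) (i j : ℕ) :
    ∫⁻ x, G x ∂nu δ δ' i j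
      = ∫⁻ x in Set.Ioo 0 1, ENNReal.ofReal (betaDensity (i + δ' / 2) (j + δ / 2) x) * G x :=
  lintegral_withDensity_eq_lintegral_mul _ (by fun_prop) hG

theorem nu_apply_of_subset {A : Set ℝ} (hA : MeasurableSet A) (hAS : A ⊆ Set.Ioo 0 1)
    (i j : ℕ) :
    nu δ δ' i j A = ∫⁻ x in A, ENNReal.ofReal (betaDensity (i + δ' / 2) (j + δ / 2) x) := by
  rw [nu, withDensity_apply _ hA, Measure.restrict_restrict hA,
    Set.inter_eq_self_of_subset_left hAS]
  rfl

theorem nu_Ioo (hδ : 0 < δ) (hδ' : 0 < δ') (i j : ℕ) : nu δ δ' i j (Set.Ioo 0 1) = 1 := by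
  rw [nu_apply_of_subset measurableSet_Ioo subset_rfl,
    lintegral_betaDensity (by positivity) (by positivity)]

theorem lintegral_setLIntegral_nu_eq_sum (hδ : 0 < δ) (hδ' : 0 < δ') {p : ℝ × ℝ → ℝ≥0}
    (hp : Measurable p)
    (hrev : ∀ x ∈ Set.Ioo (0 : ℝ) 1, ∀ y ∈ Set.Ioo (0 : ℝ) 1,
      betaDensity (δ' / 2) (δ / 2) x * p (x, y) = betaDensity (δ' / 2) (δ / 2) y * p (y, x))
    {n q : ℕ} {Λ : Finset (ℕ × ℕ)} {B : ℕ × ℕ → ℝ} (hB : ∀ ij ∈ Λ, 0 ≤ B ij)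
    (hexp : ∀ x ∈ Set.Ioo (0 : ℝ) 1,
      ∫⁻ y in Set.Ioo (0 : ℝ) 1, ENNReal.ofReal (y ^ n * (1 - y) ^ q) * (p (x, y) : ℝ≥0∞)
        = ENNReal.ofReal (∑ ij ∈ Λ, B ij * x ^ ij.1 * (1 - x) ^ ij.2))
    {A : Set ℝ} (hA : MeasurableSet A) (hAS : A ⊆ Set.Ioo 0 1) :
    ∫⁻ x, (∫⁻ y in A, (p (x, y) : ℝ≥0∞)) ∂(nu δ δ' n q)
      = ∑ ij ∈ Λ, ENNReal.ofReal (B ij * Beta (ij.1 + δ' / 2) (ij.2 + δ / 2) /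
          Beta (n + δ' / 2) (q + δ / 2)) * nu δ δ' ij.1 ij.2 A := by
  set S := Set.Ioo (0 : ℝ) 1
  set ρ : ℝ → ℝ≥0∞ := fun x => ENNReal.ofReal (betaDensity (δ' / 2) (δ / 2) x)
  set c := Beta (δ' / 2) (δ / 2) / Beta (n + δ' / 2) (q + δ / 2) with hc_def
  have ha : 0 < δ' / 2 := by positivity
  have hb : 0 < δ / 2 := by positivity
  have hc : 0 ≤ c := div_nonneg (Beta_pos ha hb).le (Beta_pos (by positivity) (by positivity)).le
  have hρ : Measurable ρ := by unfold ρ betaDensity; fun_prop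
  have hpoly : ∀ x ∈ S, 0 ≤ x ^ n * (1 - x) ^ q := fun x hx =>
    mul_nonneg (pow_nonneg hx.1.le n) (pow_nonneg (by linarith [hx.2]) q)
  have hdensity : ∀ x ∈ S, ENNReal.ofReal (betaDensity (n + δ' / 2) (q + δ / 2) x)
      = ENNReal.ofReal c * (ENNReal.ofReal (x ^ n * (1 - x) ^ q) * ρ x) := fun x hx => by
    rw [betaDensity_natCast_add ha hb hx, ENNReal.ofReal_mul hc,
      ENNReal.ofReal_mul (hpoly x hx)]
  have hrev' : ∀ x ∈ S, ∀ y ∈ S, ρ x * p (x, y) = ρ y * p (y, x) := fun x hx y hy => by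
    simp only [ρ, ← ENNReal.ofReal_coe_nnreal, ← ENNReal.ofReal_mul
      (betaDensity_nonneg ha hb hx), ← ENNReal.ofReal_mul (betaDensity_nonneg ha hb hy),
      hrev x hx y hy]
  calc ∫⁻ x, (∫⁻ y in A, (p (x, y) : ℝ≥0∞)) ∂(nu δ δ' n q)
      = ∫⁻ x in S, ENNReal.ofReal c *
          (ENNReal.ofReal (x ^ n * (1 - x) ^ q) * ρ x * ∫⁻ y in A, (p (x, y) : ℝ≥0∞)) := by
        rw [lintegral_nu (by fun_prop)]
        refine setLIntegral_congr_fun measurableSet_Ioo fun x hx => ?_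
        rw [hdensity x hx, mul_assoc]
    _ = ENNReal.ofReal c * ∫⁻ y in A, ρ y *
          ∫⁻ x in S, ENNReal.ofReal (x ^ n * (1 - x) ^ q) * (p (y, x) : ℝ≥0∞) := by
        rw [lintegral_const_mul _ (by fun_prop), setLIntegral_mul_setLIntegral_of_reversible
          (f := fun x => ENNReal.ofReal (x ^ n * (1 - x) ^ q)) (k := fun z => (p z : ℝ≥0∞))
          measurableSet_Ioo hA hAS hρ (by fun_prop) (by fun_prop) hrev']
    _ = ∫⁻ y in A, ∑ ij ∈ Λ, ENNReal.ofReal (B ij * Beta (ij.1 + δ' / 2) (ij.2 + δ / 2) /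
          Beta (n + δ' / 2) (q + δ / 2)) *
            ENNReal.ofReal (betaDensity (ij.1 + δ' / 2) (ij.2 + δ / 2) y) := by
        rw [← lintegral_const_mul _ (by fun_prop)]
        refine setLIntegral_congr_fun hA fun y hy => ?_
        rw [hexp y (hAS hy), hc_def,
          ofReal_Beta_div_mul_betaDensity_mul_sum ha hb (hAS hy) n q hB]
    _ = _ := by
        rw [lintegral_finsetSum _ fun ij _ => by fun_prop]
        refine Finset.sum_congr rfl fun ij _ => ?_
        rw [lintegral_const_mul _ (by fun_prop),
          nu_apply_of_subset hA hAS]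

end Nu

theorem stmt14 (δ δ' : ℝ) (hδ : 2 ≤ δ) (hδ' : 2 ≤ δ')
    (p : ℝ × ℝ → ℝ≥0) (hp : Measurable p)
    (hmarg : ∀ x ∈ Set.Ioo (0 : ℝ) 1, ∫⁻ y in Set.Ioo (0 : ℝ) 1, (p (x, y) : ℝ≥0∞) = 1)
    (hrev : ∀ x ∈ Set.Ioo (0 : ℝ) 1, ∀ y ∈ Set.Ioo (0 : ℝ) 1,
      (x ^ (δ' / 2 - 1) * (1 - x) ^ (δ / 2 - 1) / Beta (δ' / 2) (δ / 2)) * (p (x, y) : ℝ)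
        = (y ^ (δ' / 2 - 1) * (1 - y) ^ (δ / 2 - 1) / Beta (δ' / 2) (δ / 2)) * (p (y, x) : ℝ))
    (n q : ℕ) (Λ : Finset (ℕ × ℕ)) (B : ℕ × ℕ → ℝ) (hB : ∀ ij ∈ Λ, 0 ≤ B ij)
    (hexp : ∀ x ∈ Set.Ioo (0 : ℝ) 1,
      ∫⁻ y in Set.Ioo (0 : ℝ) 1, ENNReal.ofReal (y ^ n * (1 - y) ^ q) * (p (x, y) : ℝ≥0∞)
        = ENNReal.ofReal (∑ ij ∈ Λ, B ij * x ^ ij.1 * (1 - x) ^ ij.2)) :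
    (∀ A : Set ℝ, MeasurableSet A → A ⊆ Set.Ioo (0 : ℝ) 1 →
      ∫⁻ x, (∫⁻ y in A, (p (x, y) : ℝ≥0∞)) ∂(nu δ δ' n q)
        = ∑ ij ∈ Λ,
            ENNReal.ofReal (B ij * Beta ((ij.1 : ℝ) + δ' / 2) ((ij.2 : ℝ) + δ / 2) /
                Beta ((n : ℝ) + δ' / 2) ((q : ℝ) + δ / 2)) *
              nu δ δ' ij.1 ij.2 A) ∧
    (∀ ij ∈ Λ, 0 ≤ B ij * Beta ((ij.1 : ℝ) + δ' / 2) ((ij.2 : ℝ) + δ / 2) /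
        Beta ((n : ℝ) + δ' / 2) ((q : ℝ) + δ / 2)) ∧
    (∑ ij ∈ Λ, B ij * Beta ((ij.1 : ℝ) + δ' / 2) ((ij.2 : ℝ) + δ / 2) /
        Beta ((n : ℝ) + δ' / 2) ((q : ℝ) + δ / 2) = 1) := by
  have hδpos : 0 < δ := by linarith
  have hδ'pos : 0 < δ' := by linarith
  have hmix := fun A (hA : MeasurableSet A) hAS =>
    lintegral_setLIntegral_nu_eq_sum hδpos hδ'pos hp hrev hB hexp hA hAS
  have hweights : ∀ ij ∈ Λ, 0 ≤ B ij * Beta ((ij.1 : ℝ) + δ' / 2) ((ij.2 : ℝ) + δ / 2) /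
      Beta ((n : ℝ) + δ' / 2) ((q : ℝ) + δ / 2) :=
    mixture_weight_nonneg (by positivity) (by positivity) n q hB
  refine ⟨hmix, hweights, ?_⟩
  have htotal : ∫⁻ x, (∫⁻ y in Set.Ioo (0 : ℝ) 1, (p (x, y) : ℝ≥0∞)) ∂(nu δ δ' n q) = 1 := by
    rw [lintegral_nu (by fun_prop), setLIntegral_congr_fun measurableSet_Ioo
      fun x hx => by rw [hmarg x hx, mul_one],
      lintegral_betaDensity (by positivity) (by positivity)]
  have hsum := hmix _ measurableSet_Ioo subset_rfl
  simp only [htotal, nu_Ioo hδpos hδ'pos, mul_one, ← ENNReal.ofReal_sum_of_nonneg hweights] at hsum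
  exact ENNReal.ofReal_eq_one.mp hsum.symm
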